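/- Let M be the generalized map Witt algebra over a unital commutative algebra A with A⊗A an integral domain. If c ∈ M⊗M⊗M satisfies a·c = 0 for all a ∈ M under the diagonal adjoint action, then c = 0. -/

import Mathlib

open Finsupp TensorProduct

/-- Bracket of the generalized map Witt algebra `[L_α x, L_β y] = (β−α)L_{α+β}(xy)`,
as a bilinear map on `M = W(Γ) ⊗ A = Γ →₀ A`. -/
noncomputable def bkM {F : Type*} [Field F] (Γ : AddSubgroup F)
    (A : Type*) [CommRing A] [Algebra F A] :
    (Γ →₀ A) →ₗ[F] (Γ →₀ A) →ₗ[F] (Γ →₀ A) :=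
  Finsupp.lsum F fun α =>
    (Finsupp.lsum (R := F) (S := F) (M := A) (N := (Γ →₀ A))).toLinearMap.comp
      (LinearMap.pi fun β : Γ =>
        ((β : F) - (α : F)) •
          ((LinearMap.llcomp F A A (Γ →₀ A) (Finsupp.lsingle (α + β))).comp
            (LinearMap.mul F A)))

/-- Diagonal adjoint action of `M` on `M ⊗ M`. -/
noncomputable def actM {F : Type*} [Field F] (Γ : AddSubgroup F)
    (A : Type*) [CommRing A] [Algebra F A] (x : Γ →₀ A) :
    ((Γ →₀ A) ⊗[F] (Γ →₀ A)) →ₗ[F] ((Γ →₀ A) ⊗[F] (Γ →₀ A)) :=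
  LinearMap.rTensor _ (bkM Γ A x) + LinearMap.lTensor _ (bkM Γ A x)

/-- Diagonal adjoint action of `M` on `M ⊗ M ⊗ M`. -/
noncomputable def actM3 {F : Type*} [Field F] (Γ : AddSubgroup F)
    (A : Type*) [CommRing A] [Algebra F A] (x : Γ →₀ A) :
    ((Γ →₀ A) ⊗[F] ((Γ →₀ A) ⊗[F] (Γ →₀ A))) →ₗ[F]
      ((Γ →₀ A) ⊗[F] ((Γ →₀ A) ⊗[F] (Γ →₀ A))) :=
  LinearMap.rTensor _ (bkM Γ A x) + LinearMap.lTensor _ (actM Γ A x)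

noncomputable instance instZeroTensorM3 {F : Type*} [Field F] (Γ : AddSubgroup F)
    (A : Type*) [CommRing A] [Algebra F A] :
    Zero ((Γ →₀ A) ⊗[F] ((Γ →₀ A) ⊗[F] (Γ →₀ A))) :=
  ⟨(inferInstance : AddCommMonoid ((Γ →₀ A) ⊗[F] ((Γ →₀ A) ⊗[F] (Γ →₀ A)))).zero⟩

/-!
In graded coordinates `c` is a finitely supported function `g` on `Γ³`. Since
`[L_s, L_α] = (α - s) L_{s+α}`, invariance under `L_s 1` says `∑ᵢ (pᵢ - 2s) g(p - s eᵢ) = 0` for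
all `p ∈ Γ³`. As `Γ ⊇ ℤ` is infinite, `s` can be chosen different from every first coordinate of a
point of `supp g` and from every difference of second, resp. third, coordinates of two such points.
At `p + s e₁` with `p ∈ supp g` the relation then collapses to `(p₁ - s) g(p) = 0`.
-/

namespace AddSubgroup

lemma infinite_of_one_mem {R : Type*} [AddGroupWithOne R] [CharZero R] {Γ : AddSubgroup R}
    (h1 : (1 : R) ∈ Γ) : Infinite Γ :=
  Infinite.of_injective (fun n : ℕ => n • (⟨1, h1⟩ : Γ)) fun m n hmn => by
    simpa using congrArg Subtype.val hmn

end AddSubgroup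

namespace Finsupp

lemma smul_single_add_apply {R V G : Type*} [CommRing R] [AddCommMonoid V] [Module R V]
    [AddCommGroup G] (φ : G →+ R) (t a q : G) (v : V) :
    (φ a - φ t) • single (t + a) v q = (φ q - 2 * φ t) • single a v (q - t) := by
  obtain rfl | hq := eq_or_ne (q - t) a
  · rw [add_sub_cancel, single_eq_same, single_eq_same, map_sub]
    congr 1
    ring
  · rw [single_eq_of_ne hq, single_eq_of_ne fun h => hq (by rw [h, add_sub_cancel_left]),
      smul_zero, smul_zero]

lemma eq_zero_of_forall_shift_relation {F V : Type*} [Field F] [AddCommMonoid V] [Module F V]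
    {Γ : AddSubgroup F} [Infinite Γ] (g : Γ × Γ × Γ →₀ V)
    (h : ∀ (s : Γ) (p : Γ × Γ × Γ),
      ((p.1 : F) - 2 * s) • g (p.1 - s, p.2.1, p.2.2)
        + ((p.2.1 : F) - 2 * s) • g (p.1, p.2.1 - s, p.2.2)
        + ((p.2.2 : F) - 2 * s) • g (p.1, p.2.1, p.2.2 - s) = 0) :
    g = 0 := by
  classical
  obtain ⟨s, hs⟩ := Infinite.exists_notMem_finset
    ((g.support ×ˢ g.support).biUnion fun pq => {pq.1.1, pq.1.2.1 - pq.2.2.1, pq.1.2.2 - pq.2.2.2})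
  simp only [Finset.mem_biUnion, Finset.mem_product, mem_support_iff, Finset.mem_insert,
    Finset.mem_singleton, not_exists, not_and, Prod.forall] at hs
  refine Finsupp.ext fun ⟨p₁, p₂, p₃⟩ => ?_
  by_contra hp
  have h₂ : g (p₁ + s, p₂ - s, p₃) = 0 := by
    by_contra hq
    exact hs _ _ _ _ _ _ ⟨hp, hq⟩ (Or.inr (Or.inl (by abel)))
  have h₃ : g (p₁ + s, p₂, p₃ - s) = 0 := by
    by_contra hq
    exact hs _ _ _ _ _ _ ⟨hp, hq⟩ (Or.inr (Or.inr (by abel)))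
  have hcoeff : ((p₁ + s : Γ) : F) - 2 * s ≠ 0 := by
    intro h0
    refine hs _ _ _ _ _ _ ⟨hp, hp⟩ (Or.inl (Subtype.ext ?_))
    push_cast at h0
    linear_combination -h0
  have := h s (p₁ + s, p₂, p₃)
  simp only [add_sub_cancel_right, h₂, h₃, smul_zero, add_zero] at this
  exact hp ((smul_eq_zero.1 this).resolve_left hcoeff)

end Finsupp

section WittCoordinates

variable {F : Type*} [Field F] (Γ : AddSubgroup F) (A : Type*) [CommRing A] [Algebra F A]

lemma bkM_single_single (α β : Γ) (x y : A) :
    bkM Γ A (single α x) (single β y) = ((β : F) - α) • single (α + β) (x * y) := by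
  simp [bkM]

noncomputable def tensorCubeEquivFinsupp :
    (Γ →₀ A) ⊗[F] ((Γ →₀ A) ⊗[F] (Γ →₀ A)) ≃ₗ[F] (Γ × Γ × Γ →₀ A ⊗[F] (A ⊗[F] A)) :=
  TensorProduct.congr (LinearEquiv.refl F (Γ →₀ A)) (finsuppTensorFinsupp F F A A Γ Γ) ≪≫ₗ
    finsuppTensorFinsupp F F A (A ⊗[F] A) Γ (Γ × Γ)

@[simp]
lemma tensorCubeEquivFinsupp_single_tmul (α β γ : Γ) (x y z : A) :
    tensorCubeEquivFinsupp Γ A (single α x ⊗ₜ (single β y ⊗ₜ single γ z))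
      = single (α, β, γ) (x ⊗ₜ (y ⊗ₜ z)) := by
  simp [tensorCubeEquivFinsupp]

variable {Γ A}

lemma tensorCubeEquivFinsupp_actM3_single_one_apply (s : Γ)
    (c : (Γ →₀ A) ⊗[F] ((Γ →₀ A) ⊗[F] (Γ →₀ A))) (p : Γ × Γ × Γ) :
    tensorCubeEquivFinsupp Γ A (actM3 Γ A (single s 1) c) p
      = ((p.1 : F) - 2 * s) • tensorCubeEquivFinsupp Γ A c (p.1 - s, p.2.1, p.2.2)
        + ((p.2.1 : F) - 2 * s) • tensorCubeEquivFinsupp Γ A c (p.1, p.2.1 - s, p.2.2)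
        + ((p.2.2 : F) - 2 * s) • tensorCubeEquivFinsupp Γ A c (p.1, p.2.1, p.2.2 - s) := by
  set e := (tensorCubeEquivFinsupp Γ A).toLinearMap
  obtain ⟨p₁, p₂, p₃⟩ := p
  suffices (lapply (p₁, p₂, p₃)) ∘ₗ e ∘ₗ actM3 Γ A (single s 1)
      = ((p₁ : F) - 2 * s) • (lapply (p₁ - s, p₂, p₃) ∘ₗ e)
        + ((p₂ : F) - 2 * s) • (lapply (p₁, p₂ - s, p₃) ∘ₗ e)
        + ((p₃ : F) - 2 * s) • (lapply (p₁, p₂, p₃ - s) ∘ₗ e) from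
    LinearMap.congr_fun this c
  ext α x β y γ z
  have shift (t a : Γ × Γ × Γ) (i : Γ × Γ × Γ →+ Γ) (v : A ⊗[F] (A ⊗[F] A)) :=
    smul_single_add_apply (Γ.subtype.comp i) t a (p₁, p₂, p₃) v
  have shift₁ := shift (s, 0, 0) (α, β, γ) (AddMonoidHom.fst _ _)
  have shift₂ := shift (0, s, 0) (α, β, γ) ((AddMonoidHom.fst _ _).comp (AddMonoidHom.snd _ _))
  have shift₃ := shift (0, 0, s) (α, β, γ) ((AddMonoidHom.snd _ _).comp (AddMonoidHom.snd _ _))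
  simp only [Prod.mk_add_mk, zero_add, Prod.mk_sub_mk, sub_zero, AddMonoidHom.coe_comp,
    Function.comp_apply, AddMonoidHom.coe_fst, AddMonoidHom.coe_snd, AddSubgroup.coe_subtype]
    at shift₁ shift₂ shift₃
  simp only [e, actM3, actM, LinearMap.lTensor_add, LinearMap.coe_comp, Function.comp_apply,
    lsingle_apply, AlgebraTensorModule.curry_apply, LinearMap.restrictScalars_self,
    TensorProduct.curry_apply, LinearEquiv.coe_coe, LinearMap.add_apply, LinearMap.rTensor_tmul,
    LinearMap.lTensor_tmul, bkM_single_single, one_mul, ← smul_tmul', tmul_smul, map_add, map_smul,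
    tensorCubeEquivFinsupp_single_tmul, lapply_apply, LinearMap.smul_apply]
  rw [shift₁, shift₂, shift₃, add_assoc]

end WittCoordinates

theorem map_witt_triple_tensor_invariants_zero_general
    {F : Type*} [Field F] [CharZero F] (Γ : AddSubgroup F) (h1 : (1 : F) ∈ Γ)
    (A : Type*) [CommRing A] [Algebra F A]
    (c : (Γ →₀ A) ⊗[F] ((Γ →₀ A) ⊗[F] (Γ →₀ A)))
    (hc : ∀ a : Γ →₀ A, actM3 Γ A a c = 0) :
    c = 0 := by
  have : Infinite Γ := AddSubgroup.infinite_of_one_mem h1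
  have hcoord : tensorCubeEquivFinsupp Γ A c = 0 :=
    eq_zero_of_forall_shift_relation _ fun s p => by
      rw [← tensorCubeEquivFinsupp_actM3_single_one_apply, hc, map_zero, Finsupp.zero_apply]
  exact (LinearEquiv.map_eq_zero_iff _).1 hcoord

/-- if `A ⊗ A` is an integral domain, the `M`-invariants of
`M ⊗ M ⊗ M` vanish, where `M = W(Γ) ⊗ A` is the generalized map Witt algebra. -/
theorem map_witt_triple_tensor_invariants_zero
    {F : Type*} [Field F] [CharZero F] (Γ : AddSubgroup F) (h1 : (1 : F) ∈ Γ)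
    (A : Type*) [CommRing A] [Algebra F A] [IsDomain (A ⊗[F] A)]
    (c : (Γ →₀ A) ⊗[F] ((Γ →₀ A) ⊗[F] (Γ →₀ A)))
    (hc : ∀ a : Γ →₀ A, actM3 Γ A a c = 0) :
    c = 0 :=
  map_witt_triple_tensor_invariants_zero_general Γ h1 A c hc
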